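/- arXiv:1011.2251 — 3 statements merged into one kernel-verified Lean document; each statement's English description precedes it below -/
import Mathlib

section
/- If M ∈ H and δ, δ′ ∈ Δ₂ satisfy Mδ = δ′ (as column vectors), then δ = δ′, and either M is the identity matrix, or δ ∈ {(1,0,1),(−1,0,−1)} and M = J. -/
open Matrix

def Bmat : Matrix (Fin 3) (Fin 3) ℤ := !![3, 4, 0; 2, 3, 0; 0, 0, 1]
def Jmat : Matrix (Fin 3) (Fin 3) ℤ := !![0, 0, 1; 0, 1, 0; 1, 0, 0]

def BGL : GL (Fin 3) ℤ :=
  ⟨Bmat, !![3, -4, 0; -2, 3, 0; 0, 0, 1], by decide, by decide⟩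

def JGL : GL (Fin 3) ℤ := ⟨Jmat, Jmat, by decide, by decide⟩

def H : Subgroup (GL (Fin 3) ℤ) := Subgroup.closure {BGL, JGL}

def Delta2 : Set (Fin 3 → ℤ) :=
  {![2, 1, 0], ![-2, 1, 0], ![1, 0, 1], ![-1, 0, 1], ![-1, 0, -1]}

/-!
`H` preserves the form `Q = x² - 2y² + z²`, which equals `2` on `Δ₂`, and plays ping-pong on the
level set `Q = 2`. `B` sends the half-planes `y (x + y) > 0` into the cone `0 < y / x < 1` and
`B⁻¹` sends `y (x - y) < 0` into the cone `-1 < y / x < 0`; on these cones `|y| < |x|` and `Q = 2`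
force `|z| < |y|`, so `J` sends both into the steep cone `|x| < |y|`, which lies in both
half-planes. The images under `B^{±1}` even have `|y| ≥ 3`, so the two cones may be taken to avoid
`Δ₂`, where `|y| ≤ 1`. Hence every reduced word in `B^{±1}, J` other than `1` and `J` moves `Δ₂`
into one of the three cones, none of which meets `Δ₂`; the words of length at most two, where the
ping-pong has not started yet, are checked directly.
-/

lemma BGL_mulVec (v : Fin 3 → ℤ) :
    (BGL : Matrix (Fin 3) (Fin 3) ℤ) *ᵥ v = ![3 * v 0 + 4 * v 1, 2 * v 0 + 3 * v 1, v 2] := by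
  ext i; fin_cases i <;> simp [BGL, Bmat, mulVec, dotProduct, Fin.sum_univ_three]

lemma BGL_inv_mulVec (v : Fin 3 → ℤ) :
    ((BGL⁻¹ : GL (Fin 3) ℤ) : Matrix (Fin 3) (Fin 3) ℤ) *ᵥ v
      = ![3 * v 0 - 4 * v 1, -2 * v 0 + 3 * v 1, v 2] := by
  ext i; fin_cases i <;> simp [BGL, mulVec, dotProduct, Fin.sum_univ_three, sub_eq_add_neg]

lemma JGL_mulVec (v : Fin 3 → ℤ) : (JGL : Matrix (Fin 3) (Fin 3) ℤ) *ᵥ v = ![v 2, v 1, v 0] := by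
  ext i; fin_cases i <;> simp [JGL, Jmat, mulVec, dotProduct, Fin.sum_univ_three]

lemma JGL_inv : JGL⁻¹ = JGL := inv_eq_of_mul_eq_one_right (Units.ext (by decide))

def quadForm (v : Fin 3 → ℤ) : ℤ := v 0 ^ 2 - 2 * v 1 ^ 2 + v 2 ^ 2

lemma quadForm_vec3 (x y z : ℤ) : quadForm ![x, y, z] = x ^ 2 - 2 * y ^ 2 + z ^ 2 := rfl

lemma quadForm_BGL_mulVec (v : Fin 3 → ℤ) :
    quadForm ((BGL : Matrix (Fin 3) (Fin 3) ℤ) *ᵥ v) = quadForm v := by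
  rw [BGL_mulVec, quadForm_vec3, quadForm]; ring

lemma quadForm_BGL_inv_mulVec (v : Fin 3 → ℤ) :
    quadForm (((BGL⁻¹ : GL (Fin 3) ℤ) : Matrix (Fin 3) (Fin 3) ℤ) *ᵥ v) = quadForm v := by
  rw [BGL_inv_mulVec, quadForm_vec3, quadForm]; ring

lemma quadForm_JGL_mulVec (v : Fin 3 → ℤ) :
    quadForm ((JGL : Matrix (Fin 3) (Fin 3) ℤ) *ᵥ v) = quadForm v := by
  rw [JGL_mulVec, quadForm_vec3, quadForm]; ring

lemma abs_le_one_of_mem_Delta2 {v : Fin 3 → ℤ} (hv : v ∈ Delta2) : |v 1| ≤ 1 := by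
  rcases hv with rfl | rfl | rfl | rfl | rfl <;> simp

lemma JGL_mulVec_mem_Delta2 {δ : Fin 3 → ℤ} (hδ : δ ∈ Delta2)
    (h : (JGL : Matrix (Fin 3) (Fin 3) ℤ) *ᵥ δ ∈ Delta2) :
    (JGL : Matrix (Fin 3) (Fin 3) ℤ) *ᵥ δ = δ ∧
      δ ∈ ({![1, 0, 1], ![-1, 0, -1]} : Set (Fin 3 → ℤ)) := by
  revert h
  rw [JGL_mulVec]
  unfold Delta2
  rcases hδ with rfl | rfl | rfl | rfl | rfl <;> decide

def posCone : Set (Fin 3 → ℤ) :=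
  {v | quadForm v = 2 ∧ (0 < v 1 ∧ v 1 < v 0 ∨ v 0 < v 1 ∧ v 1 < 0) ∧ v ∉ Delta2}

def negCone : Set (Fin 3 → ℤ) :=
  {v | quadForm v = 2 ∧ (0 < v 1 ∧ v 1 < -v 0 ∨ -v 0 < v 1 ∧ v 1 < 0) ∧ v ∉ Delta2}

def steepCone : Set (Fin 3 → ℤ) := {v | quadForm v = 2 ∧ |v 0| < |v 1|}

lemma abs_lt_of_quadForm_eq_two {v : Fin 3 → ℤ} (hQ : quadForm v = 2) (h1 : v 1 ≠ 0)
    (h : |v 1| < |v 0|) : |v 2| < |v 1| := by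
  have h1' : 1 ≤ |v 1| := Int.one_le_abs h1
  have hsq : (|v 1| + 1) ^ 2 ≤ v 0 ^ 2 := by
    rw [← sq_abs (v 0)]; exact pow_le_pow_left₀ (by positivity) h 2
  rw [← sq_lt_sq, ← sq_abs (v 1)]
  unfold quadForm at hQ
  nlinarith [sq_abs (v 1)]

lemma JGL_mulVec_mem_steepCone {v : Fin 3 → ℤ} (hv : v ∈ posCone ∪ negCone) :
    (JGL : Matrix (Fin 3) (Fin 3) ℤ) *ᵥ v ∈ steepCone := by
  obtain ⟨hQ, hcone, -⟩ | ⟨hQ, hcone, -⟩ := hv <;>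
  · refine ⟨by rw [quadForm_JGL_mulVec, hQ], ?_⟩
    simp only [JGL_mulVec, cons_val_zero, cons_val_one]
    refine abs_lt_of_quadForm_eq_two hQ (by omega) ?_
    rw [lt_abs, abs_lt, abs_lt]
    omega

lemma BGL_mulVec_mem_posCone {v : Fin 3 → ℤ} (hv : v ∈ posCone ∪ steepCone) :
    (BGL : Matrix (Fin 3) (Fin 3) ℤ) *ᵥ v ∈ posCone := by
  have hQ : quadForm v = 2 := hv.elim (·.1) (·.1)
  have hhalf : 0 < v 1 ∧ -v 1 < v 0 ∨ v 1 < 0 ∧ v 0 < -v 1 := by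
    rcases hv with ⟨-, h, -⟩ | ⟨-, h⟩
    · omega
    · rw [lt_abs, abs_lt, abs_lt] at h; omega
  refine ⟨by rw [quadForm_BGL_mulVec, hQ], ?_, fun hΔ => ?_⟩
  · simp only [BGL_mulVec, cons_val_zero, cons_val_one]; omega
  · have := abs_le_one_of_mem_Delta2 hΔ
    simp only [BGL_mulVec, cons_val_one, cons_val_zero, abs_le] at this
    omega

lemma BGL_inv_mulVec_mem_negCone {v : Fin 3 → ℤ} (hv : v ∈ negCone ∪ steepCone) :
    ((BGL⁻¹ : GL (Fin 3) ℤ) : Matrix (Fin 3) (Fin 3) ℤ) *ᵥ v ∈ negCone := by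
  have hQ : quadForm v = 2 := hv.elim (·.1) (·.1)
  have hhalf : 0 < v 1 ∧ v 0 < v 1 ∨ v 1 < 0 ∧ v 1 < v 0 := by
    rcases hv with ⟨-, h, -⟩ | ⟨-, h⟩
    · omega
    · rw [lt_abs, abs_lt, abs_lt] at h; omega
  refine ⟨by rw [quadForm_BGL_inv_mulVec, hQ], ?_, fun hΔ => ?_⟩
  · simp only [BGL_inv_mulVec, cons_val_zero, cons_val_one]; omega
  · have := abs_le_one_of_mem_Delta2 hΔ
    simp only [BGL_inv_mulVec, cons_val_one, cons_val_zero, abs_le] at this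
    omega

inductive Letter
  | b
  | bInv
  | j

namespace Letter

def toGL : Letter → GL (Fin 3) ℤ
  | b => BGL
  | bInv => BGL⁻¹
  | j => JGL

def inv : Letter → Letter
  | b => bInv
  | bInv => b
  | j => j

lemma toGL_inv : ∀ a : Letter, a.inv.toGL = a.toGL⁻¹
  | b => rfl
  | bInv => (inv_inv BGL).symm
  | j => JGL_inv.symm

-- where a reduced word with first letter `a` sends `Δ₂`
def region : Letter → Set (Fin 3 → ℤ)
  | b => posCone
  | bInv => negCone
  | j => steepCone

lemma toGL_mulVec_mem_region {a c : Letter} (hac : c ≠ a.inv) {v : Fin 3 → ℤ}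
    (hv : v ∈ c.region) : (a.toGL : Matrix (Fin 3) (Fin 3) ℤ) *ᵥ v ∈ a.region := by
  cases a <;> cases c <;> simp only [inv, ne_eq, not_true_eq_false] at hac
  · exact BGL_mulVec_mem_posCone (Or.inl hv)
  · exact BGL_mulVec_mem_posCone (Or.inr hv)
  · exact BGL_inv_mulVec_mem_negCone (Or.inl hv)
  · exact BGL_inv_mulVec_mem_negCone (Or.inr hv)
  · exact JGL_mulVec_mem_steepCone (Or.inl hv)
  · exact JGL_mulVec_mem_steepCone (Or.inr hv)

lemma notMem_Delta2_of_mem_region {a : Letter} {v : Fin 3 → ℤ} (hv : v ∈ a.region) :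
    v ∉ Delta2 := by
  cases a
  · exact hv.2.2
  · exact hv.2.2
  · rintro (rfl | rfl | rfl | rfl | rfl) <;> simp [region, steepCone] at hv

lemma toGL_mulVec_mem_region_of_mem_Delta2 {a : Letter} (ha : a ≠ .j) {δ : Fin 3 → ℤ}
    (hδ : δ ∈ Delta2) :
    (a.toGL : Matrix (Fin 3) (Fin 3) ℤ) *ᵥ δ ∈ a.region ∧
      (a.toGL : Matrix (Fin 3) (Fin 3) ℤ) *ᵥ ((JGL : Matrix (Fin 3) (Fin 3) ℤ) *ᵥ δ)
        ∈ a.region := by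
  cases a
  case j => exact absurd rfl ha
  all_goals
    simp only [toGL, region, posCone, negCone, Set.mem_ofPred_eq, quadForm, Delta2]
    rcases hδ with rfl | rfl | rfl | rfl | rfl <;> decide

end Letter

def IsReducedWord (l : List Letter) : Prop := l.IsChain fun a c => c ≠ a.inv

def wordProd (l : List Letter) : GL (Fin 3) ℤ := (l.map Letter.toGL).prod

lemma wordProd_cons (a : Letter) (t : List Letter) : wordProd (a :: t) = a.toGL * wordProd t := by
  simp [wordProd]

lemma exists_isReducedWord_wordProd_eq_mul (a : Letter) {l : List Letter} (hl : IsReducedWord l) :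
    ∃ l', IsReducedWord l' ∧ wordProd l' = a.toGL * wordProd l := by
  match l, hl with
  | [], _ => exact ⟨[a], List.isChain_singleton a, rfl⟩
  | c :: t, hl =>
    by_cases hc : c = a.inv
    · refine ⟨t, hl.tail, ?_⟩
      rw [wordProd_cons, hc, Letter.toGL_inv, mul_inv_cancel_left]
    · exact ⟨a :: c :: t, List.isChain_cons_cons.mpr ⟨hc, hl⟩, rfl⟩

lemma exists_isReducedWord_of_mem_H {M : GL (Fin 3) ℤ} (hM : M ∈ H) :
    ∃ l, IsReducedWord l ∧ wordProd l = M := by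
  induction hM using Subgroup.closure_induction_left with
  | one => exact ⟨[], List.isChain_nil, rfl⟩
  | mul_left x hx y _ ih =>
    obtain ⟨l, hl, rfl⟩ := ih
    rcases hx with rfl | rfl
    · exact exists_isReducedWord_wordProd_eq_mul .b hl
    · exact exists_isReducedWord_wordProd_eq_mul .j hl
  | inv_mul_cancel x hx y _ ih =>
    obtain ⟨l, hl, rfl⟩ := ih
    rcases hx with rfl | rfl
    · exact exists_isReducedWord_wordProd_eq_mul .bInv hl
    · rw [JGL_inv]; exact exists_isReducedWord_wordProd_eq_mul .j hl

lemma wordProd_mulVec_mem_region (a : Letter) (t : List Letter) (hl : IsReducedWord (a :: t))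
    (hj : a :: t ≠ [.j]) {δ : Fin 3 → ℤ} (hδ : δ ∈ Delta2) :
    (wordProd (a :: t) : Matrix (Fin 3) (Fin 3) ℤ) *ᵥ δ ∈ a.region := by
  induction t generalizing a with
  | nil =>
    have ha : a ≠ .j := by rintro rfl; exact hj rfl
    simpa [wordProd] using (Letter.toGL_mulVec_mem_region_of_mem_Delta2 ha hδ).1
  | cons c t ih =>
    have hac : c ≠ a.inv := (List.isChain_cons_cons.mp hl).1
    rw [wordProd_cons, Units.val_mul, ← mulVec_mulVec]
    by_cases hcj : c :: t = [.j]
    · obtain ⟨rfl, rfl⟩ := List.cons_eq_cons.mp hcj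
      have ha : a ≠ .j := by rintro rfl; exact hac rfl
      simpa [wordProd, Letter.toGL] using (Letter.toGL_mulVec_mem_region_of_mem_Delta2 ha hδ).2
    · exact Letter.toGL_mulVec_mem_region hac (ih c hl.tail hcj)

/-- If `M ∈ H` and `δ, δ' ∈ Δ₂` satisfy `M δ = δ'`, then `δ = δ'`, and either
`M = I`, or `δ ∈ {(1,0,1), (-1,0,-1)}` and `M = J`. -/
theorem unicity_delta2 (M : GL (Fin 3) ℤ) (hM : M ∈ H) (δ δ' : Fin 3 → ℤ)
    (hδ : δ ∈ Delta2) (hδ' : δ' ∈ Delta2)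
    (h : (M : Matrix (Fin 3) (Fin 3) ℤ).mulVec δ = δ') :
    δ = δ' ∧ (M = 1 ∨
      (δ ∈ ({![1, 0, 1], ![-1, 0, -1]} : Set (Fin 3 → ℤ)) ∧ M = JGL)) := by
  obtain ⟨l, hl, rfl⟩ := exists_isReducedWord_of_mem_H hM
  subst h
  rcases l with _ | ⟨a, t⟩
  · simp [wordProd]
  by_cases hj : a :: t = [.j]
  · have hJ : wordProd (a :: t) = JGL := by simp [hj, wordProd, Letter.toGL]
    rw [hJ] at hδ' ⊢
    obtain ⟨hfix, hmem⟩ := JGL_mulVec_mem_Delta2 hδ hδ'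
    exact ⟨hfix.symm, Or.inr ⟨hmem, rfl⟩⟩
  · exact absurd hδ' (Letter.notMem_Delta2_of_mem_region (wordProd_mulVec_mem_region a t hl hj hδ))
end

section
/- Let k ≥ 1 and let n₁, …, n_k be nonzero integers. Set w = B^{n_k} J B^{n_{k−1}} J ⋯ B^{n₁} J (the alternating product of powers of B and copies of J). Then the third column of w is strictly decreasing in absolute value, i.e. |w₁₃| > |w₂₃| > |w₃₃|; in particular the entry w₂₃ of w in row 2 and column 3 is nonzero. -/
/-!
Ping-pong on the third column. Let `bCone` be the set of integer vectors `(a, b, c)` with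
`|b| < |a|` and `|a| + |c| < 2|b|`, so that `|a| > |b| > |c|` there, and `jCone` the set with
`|a| < |b|` and `|a| + |c| < 2|b|`. Then `J` maps `bCone` into `jCone`. Splitting `bCone` by
the sign of `ab`, `B` maps both `jCone` and the part with `ab > 0` into that part, and `B⁻¹`
maps both `jCone` and the part with `ab < 0` into that part; so every nonzero power of `B`
maps `jCone` into `bCone`. The vector `J e₃ = e₁` is not in `jCone`, but `B e₁ = (3, 2, 0)` and
`B⁻¹ e₁ = (3, -2, 0)` already lie in the right parts. Hence, by induction on the word, the third
column `w e₃` lies in `bCone`.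
-/

open Matrix

open Set

theorem Matrix.pow_mulVec_mem {n R : Type*} [Fintype n] [DecidableEq n] [Semiring R]
    {M : Matrix n n R} {s : Set (n → R)} (h : MapsTo (M *ᵥ ·) s s) {v : n → R}
    (hv : M *ᵥ v ∈ s) : ∀ {k : ℕ}, k ≠ 0 → M ^ k *ᵥ v ∈ s
  | 0, hk => absurd rfl hk
  | 1, _ => by rwa [pow_one]
  | k + 2, _ => by
    rw [pow_succ', ← mulVec_mulVec]
    exact h (pow_mulVec_mem h hv k.succ_ne_zero)

def bCone : Set (Fin 3 → ℤ) := {v | |v 1| < |v 0| ∧ |v 0| + |v 2| < 2 * |v 1|}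

def bConePos : Set (Fin 3 → ℤ) := {v | v ∈ bCone ∧ 0 < v 0 * v 1}

def bConeNeg : Set (Fin 3 → ℤ) := {v | v ∈ bCone ∧ v 0 * v 1 < 0}

def jCone : Set (Fin 3 → ℤ) := {v | |v 0| < |v 1| ∧ |v 0| + |v 2| < 2 * |v 1|}

def Binvmat : Matrix (Fin 3) (Fin 3) ℤ := !![3, -4, 0; -2, 3, 0; 0, 0, 1]

theorem val_BGL : (BGL : Matrix (Fin 3) (Fin 3) ℤ) = Bmat := rfl

theorem val_inv_BGL : ((BGL⁻¹ : GL (Fin 3) ℤ) : Matrix (Fin 3) (Fin 3) ℤ) = Binvmat := rfl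

theorem val_JGL : (JGL : Matrix (Fin 3) (Fin 3) ℤ) = Jmat := rfl

theorem Bmat_mulVec (v : Fin 3 → ℤ) :
    Bmat *ᵥ v = ![3 * v 0 + 4 * v 1, 2 * v 0 + 3 * v 1, v 2] := by
  ext i
  fin_cases i <;> simp [Bmat, mulVec, dotProduct, Fin.sum_univ_three]

theorem Binvmat_mulVec (v : Fin 3 → ℤ) :
    Binvmat *ᵥ v = ![3 * v 0 - 4 * v 1, 3 * v 1 - 2 * v 0, v 2] := by
  ext i
  fin_cases i <;> simp [Binvmat, mulVec, dotProduct, Fin.sum_univ_three] <;> ring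

theorem Jmat_mulVec (v : Fin 3 → ℤ) : Jmat *ᵥ v = ![v 2, v 1, v 0] := by
  ext i
  fin_cases i <;> simp [Jmat, mulVec, dotProduct, Fin.sum_univ_three]

theorem mapsTo_Jmat_bCone_jCone : MapsTo (Jmat *ᵥ ·) bCone jCone := by
  rintro v ⟨h₁, h₂⟩
  simp only [jCone, mem_ofPred_eq, Jmat_mulVec, cons_val_zero, cons_val_one, cons_val]
  grind

theorem mapsTo_Bmat_bConePos : MapsTo (Bmat *ᵥ ·) bConePos bConePos := by
  -- for `a, b > 0`: `2 (2a + 3b) - (3a + 4b) = a + 2b > 2b - a`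
  rintro v ⟨⟨h₁, h₂⟩, h₃⟩
  simp only [bConePos, bCone, mem_ofPred_eq, Bmat_mulVec, cons_val_zero, cons_val_one, cons_val]
  rcases pos_and_pos_or_neg_and_neg_of_mul_pos h₃ with ⟨ha, hb⟩ | ⟨ha, hb⟩
  · exact ⟨⟨by grind, by grind⟩, mul_pos (by omega) (by omega)⟩
  · exact ⟨⟨by grind, by grind⟩, mul_pos_of_neg_of_neg (by omega) (by omega)⟩

theorem mapsTo_Bmat_jCone_bConePos : MapsTo (Bmat *ᵥ ·) jCone bConePos := by
  rintro v ⟨h₁, h₂⟩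
  simp only [bConePos, bCone, mem_ofPred_eq, Bmat_mulVec, cons_val_zero, cons_val_one, cons_val]
  rcases lt_or_gt_of_ne (show v 1 ≠ 0 by grind) with hb | hb
  · exact ⟨⟨by grind, by grind⟩, mul_pos_of_neg_of_neg (by grind) (by grind)⟩
  · exact ⟨⟨by grind, by grind⟩, mul_pos (by grind) (by grind)⟩

theorem mapsTo_Binvmat_bConeNeg :
    MapsTo (Binvmat *ᵥ ·) bConeNeg bConeNeg := by
  rintro v ⟨⟨h₁, h₂⟩, h₃⟩
  simp only [bConeNeg, bCone, mem_ofPred_eq, Binvmat_mulVec, cons_val_zero, cons_val_one, cons_val]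
  rcases mul_neg_iff.mp h₃ with ⟨ha, hb⟩ | ⟨ha, hb⟩
  · exact ⟨⟨by grind, by grind⟩, mul_neg_of_pos_of_neg (by omega) (by omega)⟩
  · exact ⟨⟨by grind, by grind⟩, mul_neg_of_neg_of_pos (by omega) (by omega)⟩

theorem mapsTo_Binvmat_jCone_bConeNeg :
    MapsTo (Binvmat *ᵥ ·) jCone bConeNeg := by
  rintro v ⟨h₁, h₂⟩
  simp only [bConeNeg, bCone, mem_ofPred_eq, Binvmat_mulVec, cons_val_zero, cons_val_one, cons_val]
  rcases lt_or_gt_of_ne (show v 1 ≠ 0 by grind) with hb | hb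
  · exact ⟨⟨by grind, by grind⟩, mul_neg_of_pos_of_neg (by grind) (by grind)⟩
  · exact ⟨⟨by grind, by grind⟩, mul_neg_of_neg_of_pos (by grind) (by grind)⟩

theorem zpow_BGL_mulVec_mem_bCone {m : ℤ} (hm : m ≠ 0) {v : Fin 3 → ℤ}
    (hpos : Bmat *ᵥ v ∈ bConePos)
    (hneg : Binvmat *ᵥ v ∈ bConeNeg) :
    ((BGL ^ m : GL (Fin 3) ℤ) : Matrix (Fin 3) (Fin 3) ℤ) *ᵥ v ∈ bCone := by
  obtain ⟨k, rfl | rfl⟩ := Int.eq_nat_or_neg m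
  · rw [zpow_natCast, Units.val_pow_eq_pow_val, val_BGL]
    exact (pow_mulVec_mem mapsTo_Bmat_bConePos hpos (by omega)).1
  · rw [_root_.zpow_neg, zpow_natCast, ← inv_pow, Units.val_pow_eq_pow_val, val_inv_BGL]
    exact (pow_mulVec_mem mapsTo_Binvmat_bConeNeg hneg (by omega)).1

theorem zpow_BGL_mul_JGL_mulVec_mem_bCone {m : ℤ} (hm : m ≠ 0) {v : Fin 3 → ℤ}
    (hv : v ∈ bCone ∨ v = Pi.single 2 1) :
    ((BGL ^ m * JGL : GL (Fin 3) ℤ) : Matrix (Fin 3) (Fin 3) ℤ) *ᵥ v ∈ bCone := by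
  rw [Units.val_mul, ← mulVec_mulVec, val_JGL]
  apply zpow_BGL_mulVec_mem_bCone hm
  · rcases hv with hv | rfl
    · exact mapsTo_Bmat_jCone_bConePos (mapsTo_Jmat_bCone_jCone hv)
    · simp only [bConePos, bCone, mem_ofPred_eq, Bmat_mulVec, Jmat_mulVec]
      decide
  · rcases hv with hv | rfl
    · exact mapsTo_Binvmat_jCone_bConeNeg (mapsTo_Jmat_bCone_jCone hv)
    · simp only [bConeNeg, bCone, mem_ofPred_eq, Binvmat_mulVec, Jmat_mulVec]
      decide

theorem prod_map_mulVec_single_mem_bCone {l : List ℤ} (hl : ∀ m ∈ l, m ≠ 0) (hne : l ≠ []) :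
    (((l.map fun m => BGL ^ m * JGL).prod : GL (Fin 3) ℤ) : Matrix (Fin 3) (Fin 3) ℤ) *ᵥ
      Pi.single 2 1 ∈ bCone := by
  induction l with
  | nil => exact absurd rfl hne
  | cons m l ih =>
    rw [List.map_cons, List.prod_cons, Units.val_mul, ← mulVec_mulVec]
    refine zpow_BGL_mul_JGL_mulVec_mem_bCone (hl m List.mem_cons_self) ?_
    rcases eq_or_ne l [] with rfl | hl'
    · exact .inr (by simp only [List.map_nil, List.prod_nil, Units.val_one, one_mulVec])
    · exact .inl (ih (fun m hm => hl m (List.mem_cons_of_mem _ hm)) hl')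

/-- For nonzero integers `n₁, …, n_k` (`k ≥ 1`), the third column of the word
`w = B^{n_k} J ⋯ B^{n₁} J` is strictly decreasing in absolute value; in
particular `w₂₃ ≠ 0`. -/
theorem word_third_column (k : ℕ) (hk : 1 ≤ k) (n : Fin k → ℤ)
    (hn : ∀ i, n i ≠ 0)
    (w : GL (Fin 3) ℤ) (hw : w = (List.ofFn fun i => BGL ^ (n i) * JGL).prod) :
    |(w : Matrix (Fin 3) (Fin 3) ℤ) 0 2| > |(w : Matrix (Fin 3) (Fin 3) ℤ) 1 2| ∧
    |(w : Matrix (Fin 3) (Fin 3) ℤ) 1 2| > |(w : Matrix (Fin 3) (Fin 3) ℤ) 2 2| ∧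
    (w : Matrix (Fin 3) (Fin 3) ℤ) 1 2 ≠ 0 := by
  have hcol : (w : Matrix (Fin 3) (Fin 3) ℤ) *ᵥ Pi.single 2 1 ∈ bCone := by
    have hmap : (List.ofFn fun i => BGL ^ n i * JGL) = (List.ofFn n).map (BGL ^ · * JGL) :=
      (List.map_ofFn (f := n) (g := (BGL ^ · * JGL))).symm
    rw [hw, hmap]
    refine prod_map_mulVec_single_mem_bCone (fun m hm => ?_) ?_
    · obtain ⟨i, rfl⟩ := List.mem_ofFn.mp hm
      exact hn i
    · simpa [List.ofFn_eq_nil_iff] using Nat.one_le_iff_ne_zero.mp hk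
  obtain ⟨h₁, h₂⟩ := hcol
  simp only [mulVec_single_one, col_apply] at h₁ h₂
  exact ⟨h₁, by grind, by grind⟩
end

section
/- Let x = (x₁,x₂,x₃) ∈ ℤ³ with x₁² − 2x₂² + x₃² = 2. Then: (1) x is in the H-orbit of (1,0,1) if and only if both x₁ and x₃ are congruent to 1 or 3 modulo 8; (2) x is in the H-orbit of (−1,0,−1) if and only if both x₁ and x₃ are congruent to −1 or −3 modulo 8; (3) x is in the H-orbit of (−1,0,1) if and only if one of x₁, x₃ is congruent to −1 or −3 modulo 8 and the other is congruent to 1 or 3 modulo 8; (4) x is in the H-orbit of (2,1,0) if and only if x₁ or x₃ is congruent to 2 modulo 8; (5) x is in the H-orbit of (−2,1,0) if and only if x₁ or x₃ is congruent to −2 modulo 8. Here x is in the H-orbit of δ means there exists M ∈ H with x = Mδ as column vectors. -/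
open Matrix

/-- `x` is in the `H`-orbit of `δ` if `x = M δ` for some `M ∈ H`. -/
def InOrbit (x δ : Fin 3 → ℤ) : Prop :=
  ∃ M ∈ H, x = (M : Matrix (Fin 3) (Fin 3) ℤ).mulVec δ

/-!
`B` and `J` preserve `Q(x) = x₀² - 2x₁² + x₂²`, and on the level set `Q = 2` they also preserve
the unordered pair of classes of `x₀` and `x₂` modulo 8, where the classes are
`{1, 3}, {5, 7}, {2}, {6}, {0, 4}`: `J` swaps the two entries, and `B` changes `x₀` into
`3x₀ + 4x₁`. The five representatives have distinct invariants.

Conversely, if `x₁² > 1` then `x₀² + x₂² = 2 + 2x₁²` forces `|x₀|` or `|x₂|` to lie strictly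
between `|x₁|` and `2|x₁|`, and then `B` or `B⁻¹`, applied to that entry together with `x₁`,
strictly decreases `|x₁|`. The descent ends at the twelve solutions with `|x₁| ≤ 1`, each of
which is a representative or the image of one under a short word in `B` and `J`.
-/

theorem Subgroup.apply_smul_eq_of_mem_closure {G α β : Type*} [Group G] [MulAction G α]
    {S : Set G} {p : α → Prop} {f : α → β}
    (hp : ∀ g ∈ Subgroup.closure S, ∀ a, p a → p (g • a))
    (hf : ∀ s ∈ S, ∀ a, p a → f (s • a) = f a) {g : G} (hg : g ∈ Subgroup.closure S)
    {a : α} (ha : p a) : f (g • a) = f a := by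
  induction hg using Subgroup.closure_induction generalizing a with
  | mem s hs => exact hf s hs a ha
  | one => rw [one_smul]
  | mul g h _ hh ihg ihh => rw [mul_smul, ihg (hp h hh a ha), ihh ha]
  | inv g hg ihg => rw [← ihg (hp g⁻¹ (inv_mem hg) a ha), smul_inv_smul]

theorem BGL_mem_H : BGL ∈ H := Subgroup.subset_closure (Set.mem_insert _ _)

theorem JGL_mem_H : JGL ∈ H := Subgroup.subset_closure (Set.mem_insert_of_mem _ rfl)

theorem BGL_smul (v : Fin 3 → ℤ) : BGL • v = ![3 * v 0 + 4 * v 1, 2 * v 0 + 3 * v 1, v 2] := by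
  ext i; fin_cases i <;> simp [Units.smul_def, BGL, Bmat, mulVec, dotProduct, Fin.sum_univ_three]

theorem BGL_inv_smul (v : Fin 3 → ℤ) :
    BGL⁻¹ • v = ![3 * v 0 - 4 * v 1, -2 * v 0 + 3 * v 1, v 2] := by
  ext i; fin_cases i <;> simp [Units.smul_def, BGL, mulVec, dotProduct, Fin.sum_univ_three]; ring

theorem JGL_smul (v : Fin 3 → ℤ) : JGL • v = ![v 2, v 1, v 0] := by
  ext i; fin_cases i <;> simp [Units.smul_def, JGL, Jmat, mulVec, dotProduct, Fin.sum_univ_three]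

theorem inOrbit_iff_exists_smul {x δ : Fin 3 → ℤ} : InOrbit x δ ↔ ∃ g ∈ H, x = g • δ :=
  Iff.rfl

theorem InOrbit.refl (δ : Fin 3 → ℤ) : InOrbit δ δ := ⟨1, one_mem H, by simp⟩

theorem inOrbit_smul_iff {g : GL (Fin 3) ℤ} (hg : g ∈ H) {x δ : Fin 3 → ℤ} :
    InOrbit (g • x) δ ↔ InOrbit x δ := by
  simp only [inOrbit_iff_exists_smul]
  constructor
  · rintro ⟨M, hM, hx⟩
    exact ⟨g⁻¹ * M, mul_mem (inv_mem hg) hM, by rw [mul_smul, ← hx, inv_smul_smul]⟩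
  · rintro ⟨M, hM, rfl⟩
    exact ⟨g * M, mul_mem hg hM, (mul_smul g M δ).symm⟩

theorem quadForm_smul {g : GL (Fin 3) ℤ} (hg : g ∈ H) (v : Fin 3 → ℤ) :
    quadForm (g • v) = quadForm v := by
  refine Subgroup.apply_smul_eq_of_mem_closure (p := fun _ => True) (fun _ _ _ _ => trivial) ?_
    hg trivial
  rintro s (rfl | rfl) v - <;> simp [quadForm, BGL_smul, JGL_smul] <;> ring

theorem cast_quadForm_eq_two {R : Type*} [CommRing R] {v : Fin 3 → ℤ} (hv : quadForm v = 2) :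
    (v 0 : R) ^ 2 - 2 * (v 1 : R) ^ 2 + (v 2 : R) ^ 2 = 2 := by
  have := congrArg (Int.cast : ℤ → R) hv
  push_cast [quadForm] at this
  exact this

def classMod8 (a : ZMod 8) : ZMod 8 :=
  if a = 3 then 1 else if a = 7 then 5 else if a = 4 then 0 else a

/- On the level set, an odd `a` forces `b` even and `a ≡ 2 mod 4` forces `b` odd, so
`3a + 4b` is `3a` or `3a + 4` accordingly. -/
theorem classMod8_three_mul_add_four_mul :
    ∀ a b c : ZMod 8, a ^ 2 - 2 * b ^ 2 + c ^ 2 = 2 →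
      classMod8 (3 * a + 4 * b) = classMod8 a := by
  decide

def mod8Invariant (v : Fin 3 → ℤ) : Sym2 (ZMod 8) := s(classMod8 (v 0), classMod8 (v 2))

theorem mod8Invariant_smul {g : GL (Fin 3) ℤ} (hg : g ∈ H) {v : Fin 3 → ℤ}
    (hv : quadForm v = 2) : mod8Invariant (g • v) = mod8Invariant v := by
  refine Subgroup.apply_smul_eq_of_mem_closure (p := fun v => quadForm v = 2)
    (fun g hg v hv => (quadForm_smul hg v).trans hv) ?_ hg hv
  rintro s (rfl | rfl) v hv
  · have := classMod8_three_mul_add_four_mul _ _ _ (cast_quadForm_eq_two (R := ZMod 8) hv)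
    simp [mod8Invariant, BGL_smul, this]
  · simp [mod8Invariant, JGL_smul, Sym2.eq_swap]

theorem mod8Invariant_eq_of_inOrbit {x δ : Fin 3 → ℤ} (hx : quadForm x = 2)
    (h : InOrbit x δ) : mod8Invariant x = mod8Invariant δ := by
  obtain ⟨g, hg, rfl⟩ := inOrbit_iff_exists_smul.1 h
  exact mod8Invariant_smul hg ((quadForm_smul hg δ).symm.trans hx)

def orbitReps : Finset (Fin 3 → ℤ) :=
  {![1, 0, 1], ![-1, 0, -1], ![-1, 0, 1], ![2, 1, 0], ![-2, 1, 0]}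

theorem injOn_mod8Invariant_orbitReps : Set.InjOn mod8Invariant orbitReps := by
  have : ∀ δ ∈ orbitReps, ∀ δ' ∈ orbitReps, mod8Invariant δ = mod8Invariant δ' → δ = δ' := by
    decide
  exact fun δ hδ δ' hδ' => this δ hδ δ' hδ'

/- `(±2a + 3b)² - b² = 4(a ± b)(a ± 2b)`. -/
theorem sq_two_mul_add_three_mul_lt_or_of_mem_Ioo {R : Type*} [CommRing R] [LinearOrder R]
    [IsStrictOrderedRing R] {a b : R}
    (h : a ^ 2 ∈ Set.Ioo (b ^ 2) (4 * b ^ 2)) :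
    (2 * a + 3 * b) ^ 2 < b ^ 2 ∨ (-2 * a + 3 * b) ^ 2 < b ^ 2 := by
  obtain ⟨h1, h2⟩ := h
  rcases le_or_gt 0 (a * b) with hab | hab
  · right; nlinarith
  · left; nlinarith

theorem exists_smul_sq_lt_of_mem_Ioo {x : Fin 3 → ℤ}
    (h : x 0 ^ 2 ∈ Set.Ioo (x 1 ^ 2) (4 * x 1 ^ 2)) : ∃ g ∈ H, (g • x) 1 ^ 2 < x 1 ^ 2 := by
  rcases sq_two_mul_add_three_mul_lt_or_of_mem_Ioo h with h | h
  · exact ⟨BGL, BGL_mem_H, by simpa [BGL_smul] using h⟩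
  · exact ⟨BGL⁻¹, inv_mem BGL_mem_H, by simpa [BGL_inv_smul] using h⟩

theorem exists_smul_sq_lt {x : Fin 3 → ℤ} (hx : quadForm x = 2) (h : 1 < x 1 ^ 2) :
    ∃ g ∈ H, (g • x) 1 ^ 2 < x 1 ^ 2 := by
  have key : x 0 ^ 2 ∈ Set.Ioo (x 1 ^ 2) (4 * x 1 ^ 2) ∨
      x 2 ^ 2 ∈ Set.Ioo (x 1 ^ 2) (4 * x 1 ^ 2) := by
    simp only [Set.mem_Ioo]
    unfold quadForm at hx
    by_contra! hc
    obtain ⟨h0, h2⟩ := hc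
    have := sq_nonneg (x 0)
    have := sq_nonneg (x 2)
    rcases le_or_gt (x 0 ^ 2) (x 1 ^ 2) with hx0 | hx0
    · rcases le_or_gt (x 2 ^ 2) (x 1 ^ 2) with hx2 | hx2
      · linarith
      · linarith [h2 hx2]
    · linarith [h0 hx0]
  rcases key with h0 | h2
  · exact exists_smul_sq_lt_of_mem_Ioo h0
  · obtain ⟨g, hg, hlt⟩ :=
      exists_smul_sq_lt_of_mem_Ioo (x := JGL • x) (by simpa [JGL_smul] using h2)
    exact ⟨g * JGL, mul_mem hg JGL_mem_H, by simpa [mul_smul, JGL_smul] using hlt⟩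

theorem exists_mem_orbitReps_inOrbit_of_sq_le_one {x : Fin 3 → ℤ} (hx : quadForm x = 2)
    (h : x 1 ^ 2 ≤ 1) : ∃ δ ∈ orbitReps, InOrbit x δ := by
  obtain ⟨a, b, c, rfl⟩ : ∃ a b c : ℤ, x = ![a, b, c] :=
    ⟨x 0, x 1, x 2, by ext i; fin_cases i <;> rfl⟩
  simp only [quadForm, cons_val] at hx h
  obtain ⟨hb₁, hb₂⟩ : -1 ≤ b ∧ b ≤ 1 := by constructor <;> nlinarith
  obtain ⟨ha₁, ha₂⟩ : -2 ≤ a ∧ a ≤ 2 := by constructor <;> nlinarith [sq_nonneg c]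
  obtain ⟨hc₁, hc₂⟩ : -2 ≤ c ∧ c ≤ 2 := by constructor <;> nlinarith [sq_nonneg a]
  have hJ := JGL_mem_H
  have hB := BGL_mem_H
  -- the survivors are `(±1, 0, ±1)`, `(±2, ±1, 0)` and `(0, ±1, ±2)`
  interval_cases a <;> interval_cases b <;> interval_cases c <;> norm_num at hx <;>
    first
    | exact ⟨_, by decide, InOrbit.refl _⟩
    | exact ⟨![-1, 0, 1], by decide, JGL, hJ, by decide⟩
    | exact ⟨![2, 1, 0], by decide, BGL⁻¹, inv_mem hB, by decide⟩
    | exact ⟨![-2, 1, 0], by decide, BGL, hB, by decide⟩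
    | exact ⟨![2, 1, 0], by decide, JGL, hJ, by decide⟩
    | exact ⟨![-2, 1, 0], by decide, JGL, hJ, by decide⟩
    | exact ⟨![2, 1, 0], by decide, JGL * BGL⁻¹, mul_mem hJ (inv_mem hB), by decide⟩
    | exact ⟨![-2, 1, 0], by decide, JGL * BGL, mul_mem hJ hB, by decide⟩

theorem exists_mem_orbitReps_inOrbit (x : Fin 3 → ℤ) (hx : quadForm x = 2) :
    ∃ δ ∈ orbitReps, InOrbit x δ := by
  by_cases h : x 1 ^ 2 ≤ 1
  · exact exists_mem_orbitReps_inOrbit_of_sq_le_one hx h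
  · obtain ⟨g, hg, hlt⟩ := exists_smul_sq_lt hx (not_le.1 h)
    obtain ⟨δ, hδ, hgx⟩ := exists_mem_orbitReps_inOrbit (g • x) ((quadForm_smul hg x).trans hx)
    exact ⟨δ, hδ, (inOrbit_smul_iff hg).1 hgx⟩
termination_by (x 1).natAbs
decreasing_by exact Int.natAbs_lt_iff_sq_lt.2 hlt

theorem inOrbit_iff_mod8Invariant_eq {x δ : Fin 3 → ℤ} (hx : quadForm x = 2)
    (hδ : δ ∈ orbitReps) : InOrbit x δ ↔ mod8Invariant x = mod8Invariant δ := by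
  refine ⟨mod8Invariant_eq_of_inOrbit hx, fun h => ?_⟩
  obtain ⟨δ', hδ', hxδ'⟩ := exists_mem_orbitReps_inOrbit x hx
  have : mod8Invariant δ' = mod8Invariant δ := (mod8Invariant_eq_of_inOrbit hx hxδ').symm.trans h
  rwa [← injOn_mod8Invariant_orbitReps hδ' hδ this]

/-- The orbit of a length-3 Büchi sequence is determined by the residues of
`x₁` and `x₃` modulo 8. -/
theorem orbit_mod_eight (x : Fin 3 → ℤ)
    (hx : x 0 ^ 2 - 2 * x 1 ^ 2 + x 2 ^ 2 = 2) :
    (InOrbit x ![1, 0, 1] ↔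
      ((x 0 ≡ 1 [ZMOD 8] ∨ x 0 ≡ 3 [ZMOD 8]) ∧
       (x 2 ≡ 1 [ZMOD 8] ∨ x 2 ≡ 3 [ZMOD 8]))) ∧
    (InOrbit x ![-1, 0, -1] ↔
      ((x 0 ≡ -1 [ZMOD 8] ∨ x 0 ≡ -3 [ZMOD 8]) ∧
       (x 2 ≡ -1 [ZMOD 8] ∨ x 2 ≡ -3 [ZMOD 8]))) ∧
    (InOrbit x ![-1, 0, 1] ↔
      (((x 0 ≡ -1 [ZMOD 8] ∨ x 0 ≡ -3 [ZMOD 8]) ∧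
        (x 2 ≡ 1 [ZMOD 8] ∨ x 2 ≡ 3 [ZMOD 8])) ∨
       ((x 2 ≡ -1 [ZMOD 8] ∨ x 2 ≡ -3 [ZMOD 8]) ∧
        (x 0 ≡ 1 [ZMOD 8] ∨ x 0 ≡ 3 [ZMOD 8])))) ∧
    (InOrbit x ![2, 1, 0] ↔ (x 0 ≡ 2 [ZMOD 8] ∨ x 2 ≡ 2 [ZMOD 8])) ∧
    (InOrbit x ![-2, 1, 0] ↔ (x 0 ≡ -2 [ZMOD 8] ∨ x 2 ≡ -2 [ZMOD 8])) := by
  have h8 := cast_quadForm_eq_two (R := ZMod 8) hx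
  have hmod (a b : ℤ) : a ≡ b [ZMOD 8] ↔ (a : ZMod 8) = b :=
    (ZMod.intCast_eq_intCast_iff a b 8).symm
  simp (disch := decide) only [inOrbit_iff_mod8Invariant_eq hx, mod8Invariant, hmod]
  push_cast
  generalize (x 0 : ZMod 8) = a, (x 1 : ZMod 8) = b, (x 2 : ZMod 8) = c at h8 ⊢
  refine ⟨?_, ?_, ?_, ?_, ?_⟩ <;> revert a b c <;> decide
end
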